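/- Let 0 < σ < 1, 1 ≤ p ≤ q < ∞, and let g ∈ L¹_loc(ℝ^d). Then ‖g‖_{L^q(ℝ^d)} ≤ C ( ‖g‖_{L^p(ℝ^d)} + ( ∫_{ℝ^d} ( ∫_{ℝ^d} |g(x)−g(y)|^q / |x−y|^{σq+d} dy )^{p/q} dx )^{1/p} ), with C depending only on d, σ, p, q. -/

import Mathlib

/-!
Let `a = ‖f‖_p` and `λ = 2^{1/p} a`. By Chebyshev `{|f| > λ}` has measure at most `1/2`, so every
unit cube `Q` of the lattice `ℤ^d` keeps a set `G_Q` of measure at least `1/2` on which `|f| ≤ λ`.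
For `x ∈ G_Q` and `y ∈ Q` with `|f y| > 2λ` we have `|f y| ≤ 2 |f x - f y|` and `|x - y| ≤ 1`
(sup distance), so `m_Q = ∫_{Q ∩ {|f| > 2λ}} |f|^q` is at most `2^q F(x)`, where
`F = diffQuotientIntegral f q (σq + d)` is the inner integral of the seminorm. Averaging
`m_Q^{p/q} ≤ 2^p F^{p/q}` over `G_Q` and summing over `Q` with `(∑ m_Q)^{p/q} ≤ ∑ m_Q^{p/q}`
bounds `∫_{|f| > 2λ} |f|^q` by the seminorm, while on `{|f| ≤ 2λ}` simply
`|f|^q ≤ (2λ)^{q-p} |f|^p`.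
-/

open MeasureTheory ENNReal

open Set Function

theorem ENNReal.rpow_tsum_le_tsum_rpow {ι : Type*} (a : ι → ℝ≥0∞) {θ : ℝ} (h0 : 0 < θ)
    (h1 : θ ≤ 1) : (∑' i, a i) ^ θ ≤ ∑' i, a i ^ θ := by
  have hsum : ∀ s : Finset ι, (∑ i ∈ s, a i) ^ θ ≤ ∑ i ∈ s, a i ^ θ := by
    intro s
    induction s using Finset.cons_induction with
    | empty => simp [ENNReal.zero_rpow_of_pos h0]
    | cons i s _ ih =>
      rw [Finset.sum_cons, Finset.sum_cons]
      exact (ENNReal.rpow_add_le_add_rpow _ _ h0.le h1).trans (by gcongr)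
  rw [ENNReal.tsum_eq_iSup_sum, (ENNReal.monotone_rpow_of_nonneg h0.le).map_iSup_of_continuousAt
    ENNReal.continuous_rpow_const.continuousAt (ENNReal.zero_rpow_of_pos h0)]
  exact iSup_le fun s => (hsum s).trans (ENNReal.sum_le_tsum s)

theorem enorm_le_two_mul_enorm_sub {E : Type*} [SeminormedAddCommGroup E] {a b : E}
    (h : 2 * ‖a‖ₑ ≤ ‖b‖ₑ) : ‖b‖ₑ ≤ 2 * ‖a - b‖ₑ := by
  have htri : ‖b‖ₑ ≤ ‖a‖ₑ + ‖a - b‖ₑ := by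
    simpa using (enorm_sub_le : ‖a - (a - b)‖ₑ ≤ _)
  refine (ENNReal.add_le_add_iff_left (enorm_ne_top : ‖b‖ₑ ≠ ⊤)).1 ?_
  calc ‖b‖ₑ + ‖b‖ₑ ≤ 2 * ‖a‖ₑ + 2 * ‖a - b‖ₑ := by rw [← two_mul, ← mul_add]; gcongr
    _ ≤ ‖b‖ₑ + 2 * ‖a - b‖ₑ := by gcongr

section UnitCube

variable {ι : Type*}

def unitCube (z : ι → ℤ) : Set (ι → ℝ) := univ.pi fun i => Ico (z i : ℝ) (z i + 1)

theorem mem_unitCube {z : ι → ℤ} {x : ι → ℝ} : x ∈ unitCube z ↔ ∀ i, ⌊x i⌋ = z i := by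
  simp [unitCube, Int.floor_eq_iff]

theorem measurableSet_unitCube [Countable ι] (z : ι → ℤ) : MeasurableSet (unitCube z) :=
  MeasurableSet.univ_pi fun _ => measurableSet_Ico

theorem pairwise_disjoint_unitCube : Pairwise (Disjoint on unitCube (ι := ι)) := by
  refine fun z z' hne => disjoint_left.2 fun x hx hx' => hne (funext fun i => ?_)
  rw [← mem_unitCube.1 hx i, ← mem_unitCube.1 hx' i]

theorem iUnion_unitCube : ⋃ z, unitCube (ι := ι) z = univ :=
  eq_univ_of_forall fun x => mem_iUnion.2 ⟨fun i => ⌊x i⌋, mem_unitCube.2 fun _ => rfl⟩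

theorem lintegral_eq_tsum_setLIntegral_unitCube [Finite ι] (μ : Measure (ι → ℝ))
    (f : (ι → ℝ) → ℝ≥0∞) : ∫⁻ x, f x ∂μ = ∑' z, ∫⁻ x in unitCube z, f x ∂μ := by
  rw [← lintegral_iUnion measurableSet_unitCube pairwise_disjoint_unitCube, iUnion_unitCube,
    Measure.restrict_univ]

variable [Fintype ι]

theorem volume_unitCube (z : ι → ℤ) : volume (unitCube z) = 1 := by
  simp [unitCube, Real.volume_pi_Ico]

theorem edist_le_one_of_mem_unitCube {z : ι → ℤ} {x y : ι → ℝ} (hx : x ∈ unitCube z)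
    (hy : y ∈ unitCube z) : edist x y ≤ 1 := by
  refine edist_pi_le_iff.2 fun i => ?_
  have hxi := hx i (mem_univ i)
  have hyi := hy i (mem_univ i)
  rw [mem_Ico] at hxi hyi
  rw [edist_dist, Real.dist_eq, ← ENNReal.ofReal_one]
  exact ENNReal.ofReal_le_ofReal (abs_sub_le_iff.2 ⟨by linarith, by linarith⟩)

end UnitCube

theorem setLIntegral_rpow_le_rpow_sub_mul_lintegral {α : Type*} [MeasurableSpace α]
    {μ : Measure α} {g : α → ℝ≥0∞} (hg : Measurable g) (t : ℝ≥0∞) {p q : ℝ} (hp : 0 ≤ p)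
    (hpq : p ≤ q) : ∫⁻ x in {x | g x ≤ t}, g x ^ q ∂μ ≤ t ^ (q - p) * ∫⁻ x, g x ^ p ∂μ := by
  calc ∫⁻ x in {x | g x ≤ t}, g x ^ q ∂μ ≤ ∫⁻ x in {x | g x ≤ t}, t ^ (q - p) * g x ^ p ∂μ := by
        refine setLIntegral_mono ((hg.pow_const p).const_mul _) fun x (hx : g x ≤ t) => ?_
        rw [← sub_add_cancel q p, ENNReal.rpow_add_of_nonneg _ _ (sub_nonneg.2 hpq) hp,
          sub_add_cancel]
        gcongr
    _ = t ^ (q - p) * ∫⁻ x in {x | g x ≤ t}, g x ^ p ∂μ := lintegral_const_mul _ (hg.pow_const p)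
    _ ≤ t ^ (q - p) * ∫⁻ x, g x ^ p ∂μ := by gcongr; exact Measure.restrict_le_self

theorem lintegral_enorm_rpow_eq_eLpNorm_ofReal_rpow {α E : Type*} [MeasurableSpace α]
    {μ : Measure α} [NormedAddCommGroup E] {f : α → E} {r : ℝ} (hr : 0 < r) :
    ∫⁻ x, ‖f x‖ₑ ^ r ∂μ = eLpNorm f (.ofReal r) μ ^ r := by
  rw [eLpNorm_eq_eLpNorm' (by simpa using hr) ofReal_ne_top, toReal_ofReal hr.le,
    lintegral_rpow_enorm_eq_rpow_eLpNorm' hr]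

theorem measure_lt_enorm_le_inv_two {α E : Type*} [MeasurableSpace α] {μ : Measure α}
    [NormedAddCommGroup E] {f : α → E} (hf : AEStronglyMeasurable f μ) {p : ℝ} (hp : 0 < p) :
    μ {x | 2 ^ (1 / p) * eLpNorm f (.ofReal p) μ < ‖f x‖ₑ} ≤ 2⁻¹ := by
  set a := eLpNorm f (.ofReal p) μ
  have hp' : ENNReal.ofReal p ≠ 0 := by simpa using hp
  rcases eq_or_ne a 0 with ha | ha
  · have hf0 : μ {x | f x ≠ 0} = 0 := ae_iff.1 ((eLpNorm_eq_zero_iff hf hp').1 ha)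
    refine le_of_eq_of_le (measure_mono_null (fun x hx => ?_) hf0) zero_le
    simpa [ha] using hx
  have hc0 : (2 : ℝ≥0∞) ^ (1 / p) ≠ 0 := by positivity
  have hct : (2 : ℝ≥0∞) ^ (1 / p) ≠ ⊤ := by finiteness
  have hε : 2 ^ (1 / p) * a ≠ 0 := mul_ne_zero hc0 ha
  calc μ {x | 2 ^ (1 / p) * a < ‖f x‖ₑ} ≤ μ {x | 2 ^ (1 / p) * a ≤ ‖f x‖ₑ} :=
        measure_mono (ofPred_subset_ofPred.2 fun _ => le_of_lt)
    _ ≤ (2 ^ (1 / p) * a)⁻¹ ^ p * a ^ p := by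
        simpa [ENNReal.toReal_ofReal hp.le] using
          meas_ge_le_mul_pow_eLpNorm_enorm μ hp' ofReal_ne_top hf hε (by simp)
    _ = ((2 ^ (1 / p))⁻¹ * (a⁻¹ * a)) ^ p := by
        rw [ENNReal.mul_inv (.inl hc0) (.inl hct), ← ENNReal.mul_rpow_of_nonneg _ _ hp.le,
          mul_assoc]
    _ ≤ ((2 ^ (1 / p))⁻¹ * 1) ^ p := by gcongr; exact ENNReal.inv_mul_le_one a
    _ = 2⁻¹ := by
        rw [mul_one, ENNReal.inv_rpow, ← ENNReal.rpow_mul, one_div_mul_cancel hp.ne', rpow_one]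

section DiffQuotient

variable {ι E : Type*} [Fintype ι] [NormedAddCommGroup E] {f : (ι → ℝ) → E} {p q e : ℝ}

noncomputable def diffQuotientIntegral (f : (ι → ℝ) → E) (q e : ℝ) (x : ι → ℝ) : ℝ≥0∞ :=
  ∫⁻ y, ‖f x - f y‖ₑ ^ q / edist x y ^ e

theorem measurable_diffQuotientIntegral (hf : StronglyMeasurable f) :
    Measurable (diffQuotientIntegral f q e) := by
  have hdiff : StronglyMeasurable fun z : (ι → ℝ) × (ι → ℝ) => f z.1 - f z.2 :=
    (hf.comp_measurable measurable_fst).sub (hf.comp_measurable measurable_snd)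
  exact ((hdiff.enorm.pow_const q).div (measurable_edist.pow_const e)).lintegral_prod_right'

theorem diffQuotientIntegral_congr_ae {g : (ι → ℝ) → E} (hfg : f =ᵐ[volume] g) :
    diffQuotientIntegral f q e =ᵐ[volume] diffQuotientIntegral g q e := by
  filter_upwards [hfg] with x hx
  refine lintegral_congr_ae ?_
  filter_upwards [hfg] with y hy
  rw [hx, hy]

theorem setLIntegral_unitCube_inter_rpow_le (hf : StronglyMeasurable f) (hq : 0 ≤ q)
    (he : 0 ≤ e) {lam : ℝ≥0∞} {z : ι → ℤ} {x : ι → ℝ} (hx : x ∈ unitCube z)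
    (hfx : ‖f x‖ₑ ≤ lam) :
    ∫⁻ y in unitCube z ∩ {y | 2 * lam < ‖f y‖ₑ}, ‖f y‖ₑ ^ q ≤
      2 ^ q * diffQuotientIntegral f q e x := by
  have hmeas : Measurable fun y => ‖f x - f y‖ₑ ^ q / edist x y ^ e :=
    ((stronglyMeasurable_const.sub hf).enorm.pow_const q).div
      (measurable_edist_right.pow_const e)
  calc ∫⁻ y in unitCube z ∩ {y | 2 * lam < ‖f y‖ₑ}, ‖f y‖ₑ ^ q
      ≤ ∫⁻ y in unitCube z ∩ {y | 2 * lam < ‖f y‖ₑ},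
          2 ^ q * (‖f x - f y‖ₑ ^ q / edist x y ^ e) := by
        refine setLIntegral_mono (hmeas.const_mul _) fun y ⟨hy, hfy⟩ => ?_
        have hdist : edist x y ^ e ≤ 1 :=
          ENNReal.rpow_le_one (edist_le_one_of_mem_unitCube hx hy) he
        calc ‖f y‖ₑ ^ q ≤ (2 * ‖f x - f y‖ₑ) ^ q :=
              ENNReal.rpow_le_rpow (enorm_le_two_mul_enorm_sub
                ((by gcongr : 2 * ‖f x‖ₑ ≤ 2 * lam).trans hfy.le)) hq
          _ = 2 ^ q * ‖f x - f y‖ₑ ^ q := ENNReal.mul_rpow_of_nonneg _ _ hq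
          _ ≤ 2 ^ q * (‖f x - f y‖ₑ ^ q / edist x y ^ e) := by
              gcongr
              exact (div_one _).symm.le.trans (ENNReal.div_le_div_left hdist _)
    _ ≤ ∫⁻ y, 2 ^ q * (‖f x - f y‖ₑ ^ q / edist x y ^ e) := setLIntegral_le_lintegral _ _
    _ = 2 ^ q * diffQuotientIntegral f q e x := lintegral_const_mul _ hmeas

theorem setLIntegral_unitCube_inter_rpow_rpow_le (hf : StronglyMeasurable f) (hp : 0 < p)
    (hpq : p ≤ q) (he : 0 ≤ e) {lam : ℝ≥0∞} {z : ι → ℤ}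
    (hgood : 2⁻¹ ≤ volume (unitCube z \ {x | lam < ‖f x‖ₑ})) :
    (∫⁻ y in unitCube z ∩ {y | 2 * lam < ‖f y‖ₑ}, ‖f y‖ₑ ^ q) ^ (p / q) ≤
      2 * 2 ^ p * ∫⁻ x in unitCube z, diffQuotientIntegral f q e x ^ (p / q) := by
  set m := ∫⁻ y in unitCube z ∩ {y | 2 * lam < ‖f y‖ₑ}, ‖f y‖ₑ ^ q
  have hq : 0 < q := hp.trans_le hpq
  have hF : Measurable fun x => diffQuotientIntegral f q e x ^ (p / q) :=
    (measurable_diffQuotientIntegral hf).pow_const _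
  have hpt : ∀ x ∈ unitCube z \ {x | lam < ‖f x‖ₑ},
      m ^ (p / q) ≤ 2 ^ p * diffQuotientIntegral f q e x ^ (p / q) := by
    rintro x ⟨hx, hfx⟩
    calc m ^ (p / q) ≤ (2 ^ q * diffQuotientIntegral f q e x) ^ (p / q) := by
          gcongr
          exact setLIntegral_unitCube_inter_rpow_le hf hq.le he hx (not_lt.1 hfx)
      _ = 2 ^ p * diffQuotientIntegral f q e x ^ (p / q) := by
          rw [ENNReal.mul_rpow_of_nonneg _ _ (by positivity), ← ENNReal.rpow_mul,
            mul_div_cancel₀ _ hq.ne']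
  calc m ^ (p / q) = 2 * (m ^ (p / q) * 2⁻¹) := by
        rw [mul_comm, mul_assoc, ENNReal.inv_mul_cancel two_ne_zero ofNat_ne_top, mul_one]
    _ ≤ 2 * (m ^ (p / q) * volume (unitCube z \ {x | lam < ‖f x‖ₑ})) := by gcongr
    _ ≤ 2 * ∫⁻ x in unitCube z \ {x | lam < ‖f x‖ₑ},
          2 ^ p * diffQuotientIntegral f q e x ^ (p / q) := by
        rw [← setLIntegral_const]
        gcongr 2 * ?_
        exact setLIntegral_mono (hF.const_mul _) hpt
    _ ≤ 2 * ∫⁻ x in unitCube z, 2 ^ p * diffQuotientIntegral f q e x ^ (p / q) := by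
        gcongr 2 * ?_
        exact lintegral_mono_set sdiff_subset
    _ = 2 * 2 ^ p * ∫⁻ x in unitCube z, diffQuotientIntegral f q e x ^ (p / q) := by
        rw [lintegral_const_mul _ hF, mul_assoc]


theorem setLIntegral_lt_enorm_rpow_rpow_le (hf : StronglyMeasurable f) (hp : 0 < p)
    (hpq : p ≤ q) (he : 0 ≤ e) {lam : ℝ≥0∞} (hlam : volume {x | lam < ‖f x‖ₑ} ≤ 2⁻¹) :
    (∫⁻ y in {y | 2 * lam < ‖f y‖ₑ}, ‖f y‖ₑ ^ q) ^ (p / q) ≤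
      2 * 2 ^ p * ∫⁻ x, diffQuotientIntegral f q e x ^ (p / q) := by
  have hq : 0 < q := hp.trans_le hpq
  have hgood : ∀ z : ι → ℤ, 2⁻¹ ≤ volume (unitCube z \ {x | lam < ‖f x‖ₑ}) := fun z =>
    calc (2⁻¹ : ℝ≥0∞) = 1 - 2⁻¹ := one_sub_inv_two.symm
      _ ≤ volume (unitCube z) - volume {x | lam < ‖f x‖ₑ} := by
          rw [volume_unitCube]; gcongr
      _ ≤ volume (unitCube z \ {x | lam < ‖f x‖ₑ}) := le_measure_sdiff
  calc (∫⁻ y in {y | 2 * lam < ‖f y‖ₑ}, ‖f y‖ₑ ^ q) ^ (p / q)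
      = (∑' z, ∫⁻ y in unitCube z ∩ {y | 2 * lam < ‖f y‖ₑ}, ‖f y‖ₑ ^ q) ^ (p / q) := by
        rw [lintegral_eq_tsum_setLIntegral_unitCube]
        simp_rw [Measure.restrict_restrict (measurableSet_unitCube _)]
    _ ≤ ∑' z, (∫⁻ y in unitCube z ∩ {y | 2 * lam < ‖f y‖ₑ}, ‖f y‖ₑ ^ q) ^ (p / q) :=
        ENNReal.rpow_tsum_le_tsum_rpow _ (div_pos hp hq) ((div_le_one hq).2 hpq)
    _ ≤ ∑' z, 2 * 2 ^ p * ∫⁻ x in unitCube z, diffQuotientIntegral f q e x ^ (p / q) :=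
        ENNReal.tsum_le_tsum fun z =>
          setLIntegral_unitCube_inter_rpow_rpow_le hf hp hpq he (hgood z)
    _ = 2 * 2 ^ p * ∫⁻ x, diffQuotientIntegral f q e x ^ (p / q) := by
        rw [ENNReal.tsum_mul_left, ← lintegral_eq_tsum_setLIntegral_unitCube]

theorem lintegral_enorm_rpow_le (hf : StronglyMeasurable f) (hp : 0 < p) (hpq : p ≤ q)
    (he : 0 ≤ e) {lam : ℝ≥0∞} (hlam : volume {x | lam < ‖f x‖ₑ} ≤ 2⁻¹) :
    ∫⁻ x, ‖f x‖ₑ ^ q ≤ (2 * 2 ^ p * ∫⁻ x, diffQuotientIntegral f q e x ^ (p / q)) ^ (q / p) +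
      (2 * lam) ^ (q - p) * ∫⁻ x, ‖f x‖ₑ ^ p := by
  have hq : 0 < q := hp.trans_le hpq
  rw [← lintegral_add_compl _ (measurableSet_lt measurable_const hf.enorm)]
  gcongr
  · calc ∫⁻ y in {y | 2 * lam < ‖f y‖ₑ}, ‖f y‖ₑ ^ q
        = ((∫⁻ y in {y | 2 * lam < ‖f y‖ₑ}, ‖f y‖ₑ ^ q) ^ (p / q)) ^ (q / p) := by
          rw [← ENNReal.rpow_mul, div_mul_div_cancel₀ hq.ne', div_self hp.ne', rpow_one]
      _ ≤ _ := by gcongr; exact setLIntegral_lt_enorm_rpow_rpow_le hf hp hpq he hlam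
  · simp_rw [compl_ofPred, not_lt]
    exact setLIntegral_rpow_le_rpow_sub_mul_lintegral hf.enorm _ hp.le hpq

theorem eLpNorm_le_mul_eLpNorm_add_diffQuotient_of_stronglyMeasurable
    (hf : StronglyMeasurable f) (hp : 0 < p) (hpq : p ≤ q) (hq : 1 ≤ q) (he : 0 ≤ e) :
    eLpNorm f (.ofReal q) volume ≤ 2 * 2 ^ (1 / p) * (eLpNorm f (.ofReal p) volume +
      (∫⁻ x, diffQuotientIntegral f q e x ^ (p / q)) ^ (1 / p)) := by
  have hq0 : 0 < q := hp.trans_le hpq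
  set a := eLpNorm f (.ofReal p) volume
  set j := (∫⁻ x, diffQuotientIntegral f q e x ^ (p / q)) ^ (1 / p)
  set c : ℝ≥0∞ := 2 * 2 ^ (1 / p)
  have hc : 1 ≤ c :=
    le_mul_of_one_le_of_le one_le_two (ENNReal.one_le_rpow one_le_two (by positivity))
  have hcp : c ^ p = 2 * 2 ^ p := by
    rw [ENNReal.mul_rpow_of_nonneg _ _ hp.le, ← ENNReal.rpow_mul, one_div_mul_cancel hp.ne',
      rpow_one, mul_comm]
  have hsplit := lintegral_enorm_rpow_le hf hp hpq he (measure_lt_enorm_le_inv_two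
    hf.aestronglyMeasurable hp)
  have hj : j ^ p = ∫⁻ x, diffQuotientIntegral f q e x ^ (p / q) := by
    rw [← ENNReal.rpow_mul, one_div_mul_cancel hp.ne', rpow_one]
  rw [← mul_assoc, lintegral_enorm_rpow_eq_eLpNorm_ofReal_rpow hp,
    lintegral_enorm_rpow_eq_eLpNorm_ofReal_rpow hq0, ← hcp, ← hj] at hsplit
  rw [← ENNReal.rpow_le_rpow_iff hq0]
  calc eLpNorm f (.ofReal q) volume ^ q
      ≤ (c ^ p * j ^ p) ^ (q / p) + (c * a) ^ (q - p) * a ^ p := hsplit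
    _ ≤ (c * j) ^ q + (c * a) ^ (q - p) * (c * a) ^ p := by
        rw [← ENNReal.mul_rpow_of_nonneg _ _ hp.le, ← ENNReal.rpow_mul, mul_div_cancel₀ _ hp.ne']
        gcongr
        exact le_mul_of_one_le_left' hc
    _ = (c * a) ^ q + (c * j) ^ q := by
        rw [← ENNReal.rpow_add_of_nonneg _ _ (sub_nonneg.2 hpq) hp.le, sub_add_cancel, add_comm]
    _ ≤ (c * (a + j)) ^ q := by
        rw [mul_add]; exact ENNReal.add_rpow_le_rpow_add _ _ hq

theorem eLpNorm_le_mul_eLpNorm_add_diffQuotient (hf : AEStronglyMeasurable f volume) (hp : 0 < p)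
    (hpq : p ≤ q) (hq : 1 ≤ q) (he : 0 ≤ e) :
    eLpNorm f (.ofReal q) volume ≤ 2 * 2 ^ (1 / p) * (eLpNorm f (.ofReal p) volume +
      (∫⁻ x, diffQuotientIntegral f q e x ^ (p / q)) ^ (1 / p)) := by
  rw [eLpNorm_congr_ae hf.ae_eq_mk, eLpNorm_congr_ae hf.ae_eq_mk,
    lintegral_congr_ae ((diffQuotientIntegral_congr_ae hf.ae_eq_mk).mono fun x hx => by rw [hx])]
  exact eLpNorm_le_mul_eLpNorm_add_diffQuotient_of_stronglyMeasurable hf.stronglyMeasurable_mk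
    hp hpq hq he

end DiffQuotient

theorem stmt_6 (d : ℕ) (σ p q : ℝ) (hσ0 : 0 < σ)
    (hp : 1 ≤ p) (hpq : p ≤ q) :
    ∃ C : ℝ≥0∞, C ≠ ⊤ ∧
      ∀ g : (Fin d → ℝ) → ℝ, MeasureTheory.LocallyIntegrable g volume →
        eLpNorm g (ENNReal.ofReal q) volume ≤
          C * (eLpNorm g (ENNReal.ofReal p) volume +
            (∫⁻ x, (∫⁻ y, ((‖g x - g y‖₊ : ℝ≥0∞) ^ q) /
                (edist x y ^ (σ * q + d))) ^ (p / q)) ^ (1 / p)) := by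
  have hq : 1 ≤ q := hp.trans hpq
  refine ⟨2 * 2 ^ (1 / p), by finiteness, fun g hg => ?_⟩
  simpa only [diffQuotientIntegral, enorm_eq_nnnorm] using
    eLpNorm_le_mul_eLpNorm_add_diffQuotient hg.aestronglyMeasurable (one_pos.trans_le hp) hpq hq
      (add_nonneg (mul_nonneg hσ0.le (zero_le_one.trans hq)) d.cast_nonneg)
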